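/- Let q be a rational number with 2q ∉ ℤ and let j be a natural number. Then there exists a real algebraic number d such that the j-th iterated derivative at 0 of the function t ↦ π / sin(π(q + t)) equals d · π^(j+1). -/

import Mathlib

/-!
On `sin x ≠ 0` the `j`-th derivative of `1 / sin x` is `P_j (cos x) / sin x ^ (j + 1)` for a
polynomial `P_j` with rational coefficients, as one sees by differentiating and using
`sin² = 1 - cos²`. By the chain rule the `j`-th derivative of `π / sin (π (q + t))` at `0` is then
`π ^ (j + 1) P_j (cos πq) / sin πq ^ (j + 1)`, and the factor in front of `π ^ (j + 1)` is algebraic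
because `cos πq` and `sin πq` are.
-/

open Real Polynomial

theorem IsAlgebraic.aeval {R A : Type*} [CommRing R] [NoZeroDivisors R] [CommRing A] [Algebra R A]
    {x : A} (hx : IsAlgebraic R x) (p : R[X]) : IsAlgebraic R (aeval x p) := by
  induction p using Polynomial.induction_on' with
  | add p q hp hq => simpa only [map_add] using hp.add hq
  | monomial n r => simpa only [aeval_monomial, Algebra.smul_def] using (hx.pow n).smul r

theorem Real.sin_pi_mul_ne_zero {x : ℝ} (hx : ∀ n : ℤ, (n : ℝ) ≠ x) : sin (π * x) ≠ 0 :=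
  sin_ne_zero_iff.mpr fun n hn => hx n (mul_right_cancel₀ pi_ne_zero (hn.trans (mul_comm _ _)))

noncomputable def cscPoly : ℕ → ℚ[X]
  | 0 => 1
  | j + 1 => (X ^ 2 - 1) * derivative (cscPoly j) - (j + 1 : ℚ[X]) * X * cscPoly j

theorem hasDerivAt_aeval_cscPoly_div_sin_pow (j : ℕ) {x : ℝ} (hx : sin x ≠ 0) :
    HasDerivAt (fun y => aeval (cos y) (cscPoly j) / sin y ^ (j + 1))
      (aeval (cos x) (cscPoly (j + 1)) / sin x ^ (j + 2)) x := by
  have hnum : HasDerivAt (fun y => aeval (cos y) (cscPoly j))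
      (aeval (cos x) (derivative (cscPoly j)) * -sin x) x :=
    ((cscPoly j).hasDerivAt_aeval (cos x)).comp x (hasDerivAt_cos x)
  have hden : HasDerivAt (fun y => sin y ^ (j + 1)) ((j + 1 : ℕ) * sin x ^ j * cos x) x := by
    simpa using (hasDerivAt_sin x).fun_pow (j + 1)
  refine (hnum.fun_div hden (pow_ne_zero _ hx)).congr_deriv ?_
  have hpyth : sin x ^ 2 = 1 - cos x ^ 2 := sin_sq x
  simp only [cscPoly, map_sub, map_mul, map_pow, map_add, map_natCast, map_one, aeval_X]
  field_simp
  push_cast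
  linear_combination (-sin x ^ (2 * j + 2) * aeval (cos x) (derivative (cscPoly j))) * hpyth

theorem iteratedDeriv_inv_sin_const_mul (a : ℝ) (j : ℕ) {x : ℝ} (hx : sin (a * x) ≠ 0) :
    iteratedDeriv j (fun y => (sin (a * y))⁻¹) x =
      a ^ j * (aeval (cos (a * x)) (cscPoly j) / sin (a * x) ^ (j + 1)) := by
  induction j generalizing x with
  | zero => simp [cscPoly]
  | succ j ih =>
    have hne : ∀ᶠ y in nhds x, sin (a * y) ≠ 0 :=
      (continuous_sin.comp (continuous_const_mul a)).continuousAt.eventually_ne hx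
    have hstep := ((hasDerivAt_aeval_cscPoly_div_sin_pow j hx).comp x
      ((hasDerivAt_id x).const_mul a)).const_mul (a ^ j)
    rw [iteratedDeriv_succ, Filter.EventuallyEq.deriv_eq (hne.mono fun y hy => ih hy)]
    refine hstep.deriv.trans ?_
    ring

/-- For rational `q` with `2q ∉ ℤ` and any `j`, the `j`-th derivative at `0` of
`t ↦ π / sin (π (q + t))` is an algebraic multiple of `π^(j+1)`. -/
theorem iteratedDeriv_pi_div_sin_algebraic_multiple_pi
    (q : ℚ) (hq : ¬ ∃ k : ℤ, 2 * q = (k : ℚ)) (j : ℕ) :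
    ∃ d : ℝ, IsAlgebraic ℚ d ∧
      iteratedDeriv j (fun t : ℝ => π / Real.sin (π * ((q : ℝ) + t))) 0 = d * π ^ (j + 1) := by
  have hsin : sin (π * q) ≠ 0 := Real.sin_pi_mul_ne_zero fun n hn => hq ⟨2 * n, by
    rw [show q = n by exact_mod_cast hn.symm]
    push_cast
    rfl⟩
  refine ⟨aeval (cos (π * q)) (cscPoly j) * (sin (π * q) ^ (j + 1))⁻¹, ?_, ?_⟩
  · rw [mul_comm π]
    have hcos_alg := (isAlgebraic_cos_rat_mul_pi q).extendScalars (algebraMap ℤ ℚ).injective_int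
    have hsin_alg := (isAlgebraic_sin_rat_mul_pi q).extendScalars (algebraMap ℤ ℚ).injective_int
    exact (hcos_alg.aeval _).mul (hsin_alg.pow _).inv
  · have hshift := congrFun (iteratedDeriv_comp_const_add j (fun x => (sin (π * x))⁻¹) (q : ℝ)) 0
    simp only [add_zero] at hshift
    simp only [div_eq_mul_inv, iteratedDeriv_const_mul_field, hshift,
      iteratedDeriv_inv_sin_const_mul π j hsin]
    ring
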